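/- Let σ, τ ∈ ℂ with Re(σ+τ) > 1. Then ∫_{−∞}^{∞} (1/2+ix)^{−σ} (1/2−ix)^{−τ} dx = 2π·Γ(σ+τ−1)/(Γ(σ)Γ(τ)) (the Cauchy beta integral), where Γ is the complex Gamma function. -/

import Mathlib

/-!
For `Re σ > 0`, `Re τ > 1` write `(1/2 - ix)^{-σ} = Γ(σ)⁻¹ ∫₀^∞ t^{σ-1} e^{-(1/2 - ix) t} dt`
and exchange the integrals. Since `Γ(τ) (1/2 + 2πiu)^{-τ}` is the Fourier transform of the
one-sided kernel `1_{t>0} t^{τ-1} e^{-t/2}`, Fourier inversion evaluates the inner integral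
`∫ (1/2 + ix)^{-τ} e^{ixt} dx` as `2π t^{τ-1} e^{-t/2} / Γ(τ)`, and what remains is a Gamma
integral. For fixed `s = σ + τ` the integrand is `(1/2 - ix)^{-s} e^{σ θ(x)}` with
`θ(x) = Log(1/2 - ix) - Log(1/2 + ix)` bounded, so both sides are entire in `σ` and the identity
extends to `Re s > 1` by analytic continuation. The Laplace transform
`∫₀^∞ t^{a-1} e^{-wt} dt = Γ(a) w^{-a}` for complex `w` is likewise continued analytically from
real `w`.
-/

open MeasureTheory Complex

/-- `(1/2 + i x) ^ λ := exp (λ · Log (1/2 + i x))`, principal branch. -/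
noncomputable def zp (x : ℝ) (lam : ℂ) : ℂ :=
  Complex.exp (lam * Complex.log (1/2 + Complex.I * x))

/-- `(1/2 - i x) ^ λ := exp (λ · Log (1/2 - i x))`, principal branch. -/
noncomputable def zm (x : ℝ) (lam : ℂ) : ℂ :=
  Complex.exp (lam * Complex.log (1/2 - Complex.I * x))

open Set Filter Topology Real ComplexConjugate
open scoped FourierTransform

lemma half_add_I_mul_ne_zero (x : ℝ) : (1 / 2 + I * x : ℂ) ≠ 0 := by
  intro h; simpa using congrArg re h

lemma zp_eq_cpow (x : ℝ) (l : ℂ) : zp x l = (1 / 2 + I * x) ^ l := by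
  rw [zp, cpow_def_of_ne_zero (half_add_I_mul_ne_zero x), mul_comm]

lemma zm_eq_zp_neg (x : ℝ) (l : ℂ) : zm x l = zp (-x) l := by
  simp [zm, zp, sub_eq_add_neg]

@[fun_prop]
lemma continuous_zp (l : ℂ) : Continuous fun x : ℝ => zp x l :=
  continuous_iff_continuousAt.2 fun x =>
    ((ContinuousAt.clog (by fun_prop) (by simp [mem_slitPlane_iff])).const_mul l).cexp

lemma one_add_abs_div_four_le_norm_half_add_I_mul (x : ℝ) :
    (1 + |x|) / 4 ≤ ‖(1 / 2 + I * x : ℂ)‖ := by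
  have him : |x| ≤ ‖(1 / 2 + I * x : ℂ)‖ := by simpa using abs_im_le_norm (1 / 2 + I * x : ℂ)
  have hre : 1 / 2 ≤ ‖(1 / 2 + I * x : ℂ)‖ := by simpa using abs_re_le_norm (1 / 2 + I * x : ℂ)
  linarith

lemma norm_cpow_neg_le_of_re_pos {z s : ℂ} (hz : 0 < z.re) :
    ‖z ^ (-s)‖ ≤ rexp (π / 2 * |s.im|) * ‖z‖ ^ (-s.re) := by
  have harg : |arg z| ≤ π / 2 := abs_arg_le_pi_div_two_iff.2 hz.le
  rw [norm_cpow_of_ne_zero (fun h => by simp [h] at hz), div_eq_mul_inv, ← Real.exp_neg,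
    mul_comm, neg_re, neg_im]
  gcongr
  calc -(arg z * -s.im) ≤ |arg z| * |s.im| := by
        simpa only [abs_mul, abs_neg] using neg_le_abs (arg z * -s.im)
    _ ≤ π / 2 * |s.im| := by gcongr

lemma norm_zp_neg_le (x : ℝ) {s : ℂ} (hs : 0 ≤ s.re) :
    ‖zp x (-s)‖ ≤ rexp (π / 2 * |s.im|) * ((1 + |x|) / 4) ^ (-s.re) := by
  rw [zp_eq_cpow]
  exact (norm_cpow_neg_le_of_re_pos (by simp)).trans <| mul_le_mul_of_nonneg_left
    (rpow_le_rpow_of_nonpos (by positivity) (one_add_abs_div_four_le_norm_half_add_I_mul x)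
      (neg_nonpos.2 hs)) (exp_pos _).le

lemma integrable_zp_neg {s : ℂ} (hs : 1 < s.re) : Integrable fun x : ℝ => zp x (-s) := by
  have hbound : Integrable fun x : ℝ => (4 : ℝ) ^ s.re * (1 + ‖x‖) ^ (-s.re) :=
    (integrable_one_add_norm (by simpa using hs)).const_mul _
  refine (hbound.const_mul (rexp (π / 2 * |s.im|))).mono' (continuous_zp _).aestronglyMeasurable
    (Eventually.of_forall fun x => (norm_zp_neg_le x (by linarith)).trans_eq ?_)
  rw [div_rpow (by positivity) (by norm_num), rpow_neg (by norm_num : (0:ℝ) ≤ 4), norm_eq_abs]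
  field_simp

section ParametricIntegral

variable {α : Type*} [MeasurableSpace α] {μ : Measure α} {g h : α → ℂ}

lemma differentiableAt_integral_mul_cexp_mul {bound : α → ℝ} {z₀ : ℂ} {ε : ℝ} (hε : 0 < ε)
    (hg : AEStronglyMeasurable g μ) (hh : AEStronglyMeasurable h μ)
    (hint : Integrable (fun x => g x * cexp (z₀ * h x)) μ) (hbound : Integrable bound μ)
    (hle : ∀ᵐ x ∂μ, ∀ z ∈ Metric.ball z₀ ε, ‖g x * cexp (z * h x) * h x‖ ≤ bound x) :
    DifferentiableAt ℂ (fun z => ∫ x, g x * cexp (z * h x) ∂μ) z₀ := by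
  have hmeas (z : ℂ) : AEStronglyMeasurable (fun x => g x * cexp (z * h x)) μ :=
    hg.mul (continuous_exp.comp_aestronglyMeasurable (hh.const_mul z))
  refine (hasDerivAt_integral_of_dominated_loc_of_deriv_le (Metric.ball_mem_nhds z₀ hε)
    (Eventually.of_forall hmeas) hint ((hmeas z₀).mul hh) hle hbound
    (Eventually.of_forall fun x z _ => ?_)).2.differentiableAt
  simpa [mul_assoc] using ((hasDerivAt_mul_const (h x)).cexp.const_mul (g x))

lemma differentiable_integral_mul_cexp_mul {C : ℝ} (hg : Integrable g μ)
    (hh : AEStronglyMeasurable h μ) (hC : ∀ᵐ x ∂μ, ‖h x‖ ≤ C) :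
    Differentiable ℂ fun z => ∫ x, g x * cexp (z * h x) ∂μ := by
  intro z₀
  have hexp (z : ℂ) (hz : ‖z‖ ≤ ‖z₀‖ + 1) (x : α) (hx : ‖h x‖ ≤ C) :
      ‖cexp (z * h x)‖ ≤ rexp ((‖z₀‖ + 1) * C) := by
    refine (norm_exp_le_exp_norm _).trans (exp_le_exp.2 ?_)
    rw [norm_mul]
    exact mul_le_mul hz hx (norm_nonneg _) (by positivity)
  refine differentiableAt_integral_mul_cexp_mul one_pos hg.aestronglyMeasurable hh
    (hg.mul_bdd (c := rexp ((‖z₀‖ + 1) * C))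
      (continuous_exp.comp_aestronglyMeasurable (hh.const_mul z₀))
      (hC.mono fun x hx => hexp z₀ (by linarith) x hx))
    ((hg.norm.mul_const (rexp ((‖z₀‖ + 1) * C))).mul_const C) ?_
  filter_upwards [hC] with x hx z hz
  have hz' : ‖z‖ ≤ ‖z₀‖ + 1 := by
    linarith [norm_le_norm_add_norm_sub' z z₀, (mem_ball_iff_norm.1 hz).le]
  rw [norm_mul, norm_mul]
  gcongr
  · exact hexp z hz' x hx

end ParametricIntegral

lemma integrableOn_rpow_mul_exp_neg_mul_Ioi {s b : ℝ} (hs : -1 < s) (hb : 0 < b) :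
    IntegrableOn (fun t : ℝ => t ^ s * rexp (-(b * t))) (Ioi 0) := by
  simpa [rpow_one] using integrableOn_rpow_mul_exp_neg_mul_rpow hs zero_lt_one hb

lemma continuousOn_cpow_mul_cexp_neg_mul (a w : ℂ) :
    ContinuousOn (fun t : ℝ => (t : ℂ) ^ (a - 1) * cexp (-(w * t))) (Ioi 0) := fun t ht =>
  ((continuousAt_ofReal_cpow_const _ _ (Or.inr (ne_of_gt ht))).mul
    (by fun_prop)).continuousWithinAt

lemma norm_cpow_mul_cexp_neg_mul {t : ℝ} (ht : 0 < t) (a w : ℂ) :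
    ‖(t : ℂ) ^ (a - 1) * cexp (-(w * t))‖ = t ^ (a.re - 1) * rexp (-(w.re * t)) := by
  simp [norm_cpow_eq_rpow_re_of_pos ht, norm_exp]

lemma integrableOn_cpow_mul_cexp_neg_mul {a w : ℂ} (ha : 0 < a.re) (hw : 0 < w.re) :
    IntegrableOn (fun t : ℝ => (t : ℂ) ^ (a - 1) * cexp (-(w * t))) (Ioi 0) := by
  refine (integrableOn_rpow_mul_exp_neg_mul_Ioi (s := a.re - 1) (by linarith) hw).mono'
    ((continuousOn_cpow_mul_cexp_neg_mul a w).aestronglyMeasurable measurableSet_Ioi) ?_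
  filter_upwards [ae_restrict_mem measurableSet_Ioi] with t ht
  rw [norm_cpow_mul_cexp_neg_mul ht]

lemma differentiableAt_integral_cpow_mul_cexp_neg_mul {a w₀ : ℂ} (ha : 0 < a.re)
    (hw₀ : 0 < w₀.re) :
    DifferentiableAt ℂ (fun w => ∫ t in Ioi (0 : ℝ), (t : ℂ) ^ (a - 1) * cexp (-(w * t))) w₀ := by
  simp_rw [← mul_neg]
  refine differentiableAt_integral_mul_cexp_mul (half_pos hw₀)
    (measurable_ofReal.pow_const _).aestronglyMeasurable (by fun_prop) ?_
    (integrableOn_rpow_mul_exp_neg_mul_Ioi (by linarith : -1 < a.re) (half_pos hw₀)) ?_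
  · simp only [mul_neg]
    exact integrableOn_cpow_mul_cexp_neg_mul ha hw₀
  filter_upwards [ae_restrict_mem measurableSet_Ioi] with t (ht : 0 < t) z hz
  have hre : w₀.re / 2 ≤ z.re := by
    have := (abs_re_le_norm (z - w₀)).trans (mem_ball_iff_norm.1 hz).le
    rw [sub_re, abs_le] at this
    linarith
  rw [mul_neg, norm_neg, mul_neg, norm_mul, norm_cpow_mul_cexp_neg_mul ht, norm_real,
    norm_of_nonneg ht.le, mul_right_comm, ← rpow_add_one ht.ne', sub_add_cancel]
  gcongr

lemma integral_cpow_mul_cexp_neg_mul_Ioi {a w : ℂ} (ha : 0 < a.re) (hw : 0 < w.re) :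
    ∫ t in Ioi (0 : ℝ), (t : ℂ) ^ (a - 1) * cexp (-(w * t)) = Gamma a * w ^ (-a) := by
  set U : Set ℂ := {z | 0 < z.re}
  have hU : IsOpen U := isOpen_lt continuous_const continuous_re
  have hF : AnalyticOnNhd ℂ (fun w => ∫ t in Ioi (0 : ℝ), (t : ℂ) ^ (a - 1) * cexp (-(w * t))) U :=
    DifferentiableOn.analyticOnNhd (fun w hw =>
      (differentiableAt_integral_cpow_mul_cexp_neg_mul ha hw).differentiableWithinAt) hU
  have hG : AnalyticOnNhd ℂ (fun w => Gamma a * w ^ (-a)) U :=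
    DifferentiableOn.analyticOnNhd (fun w hw =>
      ((differentiableAt_id.cpow_const (Or.inl hw)).const_mul _).differentiableWithinAt) hU
  have hreal : ∀ᶠ r : ℝ in 𝓝[≠] 1, ∫ t in Ioi (0 : ℝ), (t : ℂ) ^ (a - 1) * cexp (-(r * t))
      = Gamma a * (r : ℂ) ^ (-a) := by
    filter_upwards [nhdsWithin_le_nhds (lt_mem_nhds one_pos)] with r hr
    rw [integral_cpow_mul_exp_neg_mul_Ioi ha hr, one_div,
      inv_cpow _ _ (by simp [arg_ofReal_of_nonneg hr.le, pi_ne_zero.symm]), cpow_neg, mul_comm]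
  have hofReal : Tendsto ((↑) : ℝ → ℂ) (𝓝[≠] 1) (𝓝[≠] 1) :=
    continuous_ofReal.continuousWithinAt.tendsto_nhdsWithin fun _ _ ↦ by simp_all
  exact hF.eqOn_of_preconnected_of_frequently_eq hG (convex_halfSpace_re_gt 0).isPreconnected
    (by simp [U]) (hofReal.frequently hreal.frequently) hw

noncomputable def gammaKernel (τ : ℂ) : ℝ → ℂ :=
  indicator (Ioi 0) fun t => (t : ℂ) ^ (τ - 1) * cexp (-(1 / 2 * t))

lemma integrable_gammaKernel {τ : ℂ} (hτ : 0 < τ.re) : Integrable (gammaKernel τ) :=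
  (integrable_indicator_iff measurableSet_Ioi).2
    (integrableOn_cpow_mul_cexp_neg_mul hτ (by norm_num))

lemma gammaKernel_of_pos (τ : ℂ) {t : ℝ} (ht : 0 < t) :
    gammaKernel τ t = (t : ℂ) ^ (τ - 1) * cexp (-(1 / 2 * t)) :=
  indicator_of_mem ht _

lemma continuousAt_gammaKernel (τ : ℂ) {t : ℝ} (ht : 0 < t) : ContinuousAt (gammaKernel τ) t :=
  ((continuousOn_cpow_mul_cexp_neg_mul τ (1 / 2)).continuousAt (Ioi_mem_nhds ht)).congr
    (eventuallyEq_of_mem (Ioi_mem_nhds ht) fun _ hs => (gammaKernel_of_pos τ hs).symm)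

lemma fourier_gammaKernel {τ : ℂ} (hτ : 0 < τ.re) (u : ℝ) :
    𝓕 (gammaKernel τ) u = Gamma τ * zp (2 * π * u) (-τ) := by
  have hw : (0 : ℝ) < (1 / 2 + I * ↑(2 * π * u)).re := by simp
  rw [fourier_real_eq_integral_exp_smul, zp_eq_cpow,
    ← integral_cpow_mul_cexp_neg_mul_Ioi hτ hw, ← integral_indicator measurableSet_Ioi]
  congr 1 with t
  by_cases ht : t ∈ Ioi 0
  · rw [gammaKernel, indicator_of_mem ht, indicator_of_mem ht, smul_eq_mul, mul_left_comm,
      ← Complex.exp_add]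
    congr 2
    push_cast
    ring
  · simp [gammaKernel, indicator_of_notMem ht]

lemma integrable_fourier_gammaKernel {τ : ℂ} (hτ : 1 < τ.re) : Integrable (𝓕 (gammaKernel τ)) := by
  rw [funext (fourier_gammaKernel (by linarith : 0 < τ.re))]
  exact ((integrable_zp_neg hτ).comp_mul_left' (by positivity)).const_mul _

lemma integral_zp_neg_mul_cexp {τ : ℂ} (hτ : 1 < τ.re) {t : ℝ} (ht : 0 < t) :
    ∫ x, zp x (-τ) * cexp (I * t * x) = 2 * π * gammaKernel τ t / Gamma τ := by
  have hΓ : Gamma τ ≠ 0 := Gamma_ne_zero_of_re_pos (by linarith)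
  have hinv := (integrable_gammaKernel (by linarith)).fourierInv_fourier_eq
    (integrable_fourier_gammaKernel hτ) (continuousAt_gammaKernel τ ht)
  rw [fourierInv_eq_fourier_neg, fourier_real_eq_integral_exp_smul] at hinv
  have hscale := Measure.integral_comp_mul_left (fun x : ℝ => zp x (-τ) * cexp (I * t * x)) (2 * π)
  rw [abs_of_pos (by positivity), eq_inv_smul_iff₀ (by positivity)] at hscale
  have hpt (u : ℝ) : zp (2 * π * u) (-τ) * cexp (I * t * ↑(2 * π * u))
      = (Gamma τ)⁻¹ * (cexp (↑(-2 * π * u * -t) * I) • 𝓕 (gammaKernel τ) u) := by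
    rw [fourier_gammaKernel (by linarith), smul_eq_mul]
    field_simp
    congr 2
    push_cast
    ring
  rw [← hscale, real_smul, funext hpt, integral_const_mul, hinv]
  push_cast
  field_simp

lemma integrable_zp_neg_mul_cpow_mul_cexp {σ τ : ℂ} (hσ : 0 < σ.re) (hτ : 1 < τ.re) :
    Integrable (fun p : ℝ × ℝ =>
        zp p.1 (-τ) * ((p.2 : ℂ) ^ (σ - 1) * cexp (-((1 / 2 - I * p.1) * p.2))))
      (volume.prod (volume.restrict (Ioi 0))) := by
  have hbound : Integrable
      (fun p : ℝ × ℝ => ‖zp p.1 (-τ)‖ * (p.2 ^ (σ.re - 1) * rexp (-(1 / 2 * p.2))))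
      (volume.prod (volume.restrict (Ioi 0))) :=
    (integrable_zp_neg hτ).norm.mul_prod
      (integrableOn_rpow_mul_exp_neg_mul_Ioi (by linarith) (by norm_num))
  refine hbound.mono' (by fun_prop) ?_
  rw [← Measure.restrict_univ (μ := volume), Measure.prod_restrict]
  filter_upwards [ae_restrict_mem (MeasurableSet.univ.prod measurableSet_Ioi)] with p hp
  rw [norm_mul, norm_cpow_mul_cexp_neg_mul hp.2]
  simp

lemma integral_zp_neg_mul_zm_neg_of_re_pos {σ τ : ℂ} (hσ : 0 < σ.re) (hτ : 1 < τ.re) :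
    ∫ x, zp x (-σ) * zm x (-τ) = 2 * π * Gamma (σ + τ - 1) / (Gamma σ * Gamma τ) := by
  set Φ : ℝ → ℝ → ℂ := fun x t =>
    zp x (-τ) * ((t : ℂ) ^ (σ - 1) * cexp (-((1 / 2 - I * x) * t)))
  have hΓσ : Gamma σ ≠ 0 := Gamma_ne_zero_of_re_pos hσ
  have hΓτ : Gamma τ ≠ 0 := Gamma_ne_zero_of_re_pos (by linarith)
  have hlaplace (x : ℝ) : zm x (-σ) * zp x (-τ) = (Gamma σ)⁻¹ * ∫ t in Ioi 0, Φ x t := by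
    have hw : (0 : ℝ) < (1 / 2 - I * x).re := by simp
    have hzm : zm x (-σ) = (1 / 2 - I * x) ^ (-σ) := by
      rw [zm_eq_zp_neg, zp_eq_cpow, ofReal_neg, mul_neg, ← sub_eq_add_neg]
    rw [integral_const_mul, integral_cpow_mul_cexp_neg_mul_Ioi hσ hw, hzm, mul_left_comm,
      inv_mul_cancel_left₀ hΓσ, mul_comm]
  have hinner : ∀ t ∈ Ioi (0 : ℝ), ∫ x, Φ x t
      = 2 * π / Gamma τ * ((t : ℂ) ^ ((σ + τ - 1) - 1) * cexp (-(1 * t))) := by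
    intro t (ht : 0 < t)
    have hsplit (x : ℝ) :
        Φ x t = (t : ℂ) ^ (σ - 1) * cexp (-(1 / 2 * t)) * (zp x (-τ) * cexp (I * t * x)) := by
      simp only [Φ]
      rw [show -((1 / 2 - I * x) * t) = -(1 / 2 * t) + I * t * x by ring, Complex.exp_add]
      ring
    rw [funext hsplit, integral_const_mul, integral_zp_neg_mul_cexp hτ ht, gammaKernel_of_pos τ ht,
      show σ + τ - 1 - 1 = (σ - 1) + (τ - 1) by ring, cpow_add _ _ (ofReal_ne_zero.2 ht.ne'),
      show -(1 * (t : ℂ)) = -(1 / 2 * t) + -(1 / 2 * t) by ring, Complex.exp_add]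
    ring
  calc ∫ x, zp x (-σ) * zm x (-τ)
      = ∫ x, zm x (-σ) * zp x (-τ) := by
        rw [← integral_neg_eq_self]
        simp only [zm_eq_zp_neg, neg_neg]
    _ = (Gamma σ)⁻¹ * ∫ t in Ioi 0, ∫ x, Φ x t := by
        rw [funext hlaplace, integral_const_mul,
          integral_integral_swap (integrable_zp_neg_mul_cpow_mul_cexp hσ hτ)]
    _ = (Gamma σ)⁻¹ * (2 * π / Gamma τ * (Gamma (σ + τ - 1) * 1 ^ (-(σ + τ - 1)))) := by
        rw [setIntegral_congr_fun measurableSet_Ioi hinner, integral_const_mul,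
          integral_cpow_mul_cexp_neg_mul_Ioi (by simp only [sub_re, add_re, one_re]; linarith)
            (by simp)]
    _ = 2 * π * Gamma (σ + τ - 1) / (Gamma σ * Gamma τ) := by
        rw [one_cpow]
        field_simp

lemma norm_log_sub_log_le (x : ℝ) :
    ‖log (1 / 2 - I * x) - log (1 / 2 + I * x)‖ ≤ π := by
  have hconj : (1 / 2 - I * x : ℂ) = conj (1 / 2 + I * x) := by
    apply Complex.ext <;> simp
  have harg : |arg (1 / 2 + I * x)| ≤ π / 2 := abs_arg_le_pi_div_two_iff.2 (by simp)
  rw [hconj, log_conj _ (by linarith [le_abs_self (arg (1 / 2 + I * x)), pi_pos]), ← neg_sub,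
    sub_conj, norm_neg, norm_mul, norm_I, mul_one, norm_real, norm_eq_abs, log_im, abs_mul,
    abs_two]
  linarith

lemma zp_neg_mul_zm_neg_eq (s z : ℂ) (x : ℝ) :
    zp x (-z) * zm x (-(s - z))
      = zm x (-s) * cexp (z * (log (1 / 2 - I * x) - log (1 / 2 + I * x))) := by
  rw [zp, zm, zm, ← Complex.exp_add, ← Complex.exp_add]
  ring_nf

lemma integrable_zm_neg {s : ℂ} (hs : 1 < s.re) : Integrable fun x : ℝ => zm x (-s) := by
  simpa only [zm_eq_zp_neg] using (integrable_zp_neg hs).comp_neg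

lemma differentiable_integral_zp_neg_mul_zm_neg {s : ℂ} (hs : 1 < s.re) :
    Differentiable ℂ fun z => ∫ x, zp x (-z) * zm x (-(s - z)) := by
  simp_rw [zp_neg_mul_zm_neg_eq s]
  exact differentiable_integral_mul_cexp_mul (integrable_zm_neg hs) (by fun_prop)
    (Eventually.of_forall norm_log_sub_log_le)

lemma differentiable_const_div_Gamma_mul_Gamma_sub (s : ℂ) :
    Differentiable ℂ fun z : ℂ => 2 * π * Gamma (s - 1) / (Gamma z * Gamma (s - z)) := by
  simp_rw [div_eq_mul_inv, mul_inv]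
  exact (differentiable_const _).mul (differentiable_one_div_Gamma.mul
    (differentiable_one_div_Gamma.comp ((differentiable_const s).sub differentiable_id)))

/-- The Cauchy beta integral:
`∫_ℝ (1/2+ix)^{-σ} (1/2-ix)^{-τ} dx = 2π Γ(σ+τ-1)/(Γ(σ)Γ(τ))` for `Re(σ+τ) > 1`. -/
theorem stmt1 (σ τ : ℂ) (h : 1 < (σ + τ).re) :
    ∫ x : ℝ, zp x (-σ) * zm x (-τ)
      = 2 * Real.pi * Complex.Gamma (σ + τ - 1) / (Complex.Gamma σ * Complex.Gamma τ) := by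
  set s := σ + τ
  have hτ : τ = s - σ := by ring
  have hS : IsOpen {z : ℂ | 0 < z.re ∧ 1 < (s - z).re} :=
    (isOpen_lt continuous_const continuous_re).inter
      (isOpen_lt continuous_const (continuous_re.comp (by fun_prop)))
  have hz₀ : ((s.re - 1) / 2 : ℂ) ∈ {z : ℂ | 0 < z.re ∧ 1 < (s - z).re} := by
    constructor <;> simp only [div_ofNat_re, sub_re, ofReal_re, one_re] <;> linarith
  have hagree : (fun z => ∫ x, zp x (-z) * zm x (-(s - z)))
      =ᶠ[𝓝 ((s.re - 1) / 2 : ℂ)] fun z => 2 * π * Gamma (s - 1) / (Gamma z * Gamma (s - z)) :=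
    eventually_of_mem (hS.mem_nhds hz₀) fun z ⟨hz, hsz⟩ => by
      simp only [integral_zp_neg_mul_zm_neg_of_re_pos hz hsz, add_sub_cancel]
  have hext := (analyticOnNhd_univ_iff_differentiable.2
    (differentiable_integral_zp_neg_mul_zm_neg h)).eq_of_eventuallyEq
    (analyticOnNhd_univ_iff_differentiable.2
      (differentiable_const_div_Gamma_mul_Gamma_sub s)) hagree
  rw [hτ]
  exact congrFun hext σ
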